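/- arXiv:1303.5389 — 3 statements merged into one kernel-verified Lean document; each statement's English description precedes it below -/
import Mathlib

section
/- Let V and H be Banach spaces, U an open subset of V, and V_M a finite-dimensional subspace of V. Let K_M be a compact and convex subset of V_M ∩ U. Suppose T : U → H is a map such that (1) T restricted to V_M ∩ U is injective, (2) T is continuously Fréchet differentiable on U, and (3) for every x ∈ V_M ∩ U the Fréchet derivative dT_x restricted to V_M is injective. Then there exists a constant C > 0 such that for all x, y ∈ K_M, ‖x − y‖_V ≤ C · ‖T(x) − T(y)‖_H. -/
open Filter Topology

/-!
By compactness of `KM ×ˢ KM` it suffices to find a constant near each point and take the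
maximum of finitely many. Off the diagonal, injectivity and continuity of `T` keep
`‖T x - T y‖` away from zero. Near a diagonal point `(a, a)`, `dT_a` is injective on the
finite-dimensional `V_M`, so `‖v‖ ≤ K ‖dT_a v‖` there; by the mean value inequality and the
continuity of `x ↦ dT_x`, `T x - T y` differs from `dT_a (x - y)` by at most `‖x - y‖ / (2K)`
on a convex neighbourhood of `a` in `KM`.
-/

theorem LinearMap.exists_pos_norm_le_mul_norm_of_injOn {E F : Type*}
    [NormedAddCommGroup E] [NormedSpace ℝ E] [NormedAddCommGroup F] [NormedSpace ℝ F]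
    {W : Submodule ℝ E} [FiniteDimensional ℝ W] (L : E →ₗ[ℝ] F) (hL : Set.InjOn L W) :
    ∃ K > 0, ∀ v ∈ W, ‖v‖ ≤ K * ‖L v‖ := by
  have hker : LinearMap.ker (L ∘ₗ W.subtype) = ⊥ :=
    LinearMap.ker_eq_bot.mpr fun u v huv => Subtype.ext (hL u.2 v.2 huv)
  obtain ⟨K, hK, hanti⟩ := (L ∘ₗ W.subtype).exists_antilipschitzWith hker
  exact ⟨K, hK, fun v hv => hanti.le_mul_norm (map_zero _) ⟨v, hv⟩⟩

theorem Convex.eventually_norm_sub_le_mul_norm_image_sub {E F : Type*}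
    [NormedAddCommGroup E] [NormedSpace ℝ E] [NormedAddCommGroup F] [NormedSpace ℝ F]
    {f : E → F} {f' : E → E →L[ℝ] F} {S : Set E} {a : E} {K : ℝ} (hS : Convex ℝ S)
    (hf : ∀ x ∈ S, HasFDerivWithinAt f (f' x) S x) (hf' : ContinuousWithinAt f' S a)
    (hK : 0 < K) (hbound : ∀ x ∈ S, ∀ y ∈ S, ‖x - y‖ ≤ K * ‖f' a (x - y)‖) :
    ∀ᶠ z in 𝓝[S ×ˢ S] (a, a), ‖z.1 - z.2‖ ≤ 2 * K * ‖f z.1 - f z.2‖ := by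
  obtain ⟨δ, hδ, hclose⟩ := Metric.continuousWithinAt_iff.mp hf' (2 * K)⁻¹ (by positivity)
  have hs : S ∩ Metric.ball a δ ∈ 𝓝[S] a := inter_mem_nhdsWithin S (Metric.ball_mem_nhds a hδ)
  rw [nhdsWithin_prod_eq]
  filter_upwards [prod_mem_prod hs hs] with ⟨x, y⟩ ⟨hx, hy⟩
  have hmvt : ‖f x - f y - f' a (x - y)‖ ≤ (2 * K)⁻¹ * ‖x - y‖ :=
    (hS.inter (convex_ball a δ)).norm_image_sub_le_of_norm_hasFDerivWithin_le'
      (fun z hz => (hf z hz.1).mono Set.inter_subset_left)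
      (fun z hz => by rw [← dist_eq_norm]; exact (hclose hz.1 hz.2).le)
      hy hx
  have hlin : ‖f' a (x - y)‖ ≤ ‖f x - f y‖ + (2 * K)⁻¹ * ‖x - y‖ :=
    (norm_le_norm_add_norm_sub' (f' a (x - y)) (f x - f y)).trans
      (by rw [norm_sub_rev (f' a (x - y))]; gcongr)
  have hhalf : ‖x - y‖ ≤ K * ‖f x - f y‖ + ‖x - y‖ / 2 :=
    calc ‖x - y‖ ≤ K * ‖f' a (x - y)‖ := hbound x hx.1 y hy.1
      _ ≤ K * (‖f x - f y‖ + (2 * K)⁻¹ * ‖x - y‖) := by gcongr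
      _ = K * ‖f x - f y‖ + ‖x - y‖ / 2 := by field_simp
  linarith

theorem ContinuousOn.eventually_dist_le_mul_dist_image_of_ne {X Y : Type*}
    [PseudoMetricSpace X] [MetricSpace Y] {f : X → Y} {K : Set X} {a b : X}
    (hf : ContinuousOn f K) (ha : a ∈ K) (hb : b ∈ K) (hab : f a ≠ f b) :
    ∃ C, ∀ᶠ z in 𝓝[K ×ˢ K] (a, b), dist z.1 z.2 ≤ C * dist (f z.1) (f z.2) := by
  have hpos : 0 < dist (f a) (f b) := dist_pos.mpr hab
  set C := dist a b / dist (f a) (f b) + 1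
  have hcont : ContinuousWithinAt (fun z : X × X => dist z.1 z.2 - C * dist (f z.1) (f z.2))
      (K ×ˢ K) (a, b) := by
    have hf₁ : ContinuousWithinAt (fun z : X × X => f z.1) (K ×ˢ K) (a, b) :=
      (hf a ha).comp continuousWithinAt_fst fun _ hz => hz.1
    have hf₂ : ContinuousWithinAt (fun z : X × X => f z.2) (K ×ˢ K) (a, b) :=
      (hf b hb).comp continuousWithinAt_snd fun _ hz => hz.2
    exact (continuousWithinAt_fst.dist continuousWithinAt_snd).sub
      (continuousWithinAt_const.mul (hf₁.dist hf₂))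
  have hneg : dist a b - C * dist (f a) (f b) < 0 := by
    simp only [C, add_mul, div_mul_cancel₀ _ hpos.ne']
    linarith
  exact ⟨C, (hcont.eventually_lt_const hneg).mono fun z hz => by linarith⟩

theorem IsCompact.exists_pos_dist_le_mul_dist_image {X Y : Type*}
    [PseudoMetricSpace X] [MetricSpace Y] {f : X → Y} {K : Set X} (hK : IsCompact K)
    (hf : ContinuousOn f K) (hinj : Set.InjOn f K)
    (hdiag : ∀ a ∈ K, ∃ C, ∀ᶠ z in 𝓝[K ×ˢ K] (a, a),
      dist z.1 z.2 ≤ C * dist (f z.1) (f z.2)) :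
    ∃ C > 0, ∀ x ∈ K, ∀ y ∈ K, dist x y ≤ C * dist (f x) (f y) := by
  obtain ⟨C, hC⟩ : ∃ C, ∀ z ∈ K ×ˢ K, dist z.1 z.2 ≤ C * dist (f z.1) (f z.2) := by
    refine (hK.prod hK).induction_on ⟨0, by simp⟩
      (fun s t hst ⟨C, hC⟩ => ⟨C, fun z hz => hC z (hst hz)⟩)
      (fun s t ⟨C₁, hC₁⟩ ⟨C₂, hC₂⟩ => ⟨max C₁ C₂, ?_⟩) ?_
    · rintro z (hz | hz)
      · exact (hC₁ z hz).trans (by gcongr; exact le_max_left _ _)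
      · exact (hC₂ z hz).trans (by gcongr; exact le_max_right _ _)
    · rintro ⟨a, b⟩ ⟨ha, hb⟩
      obtain ⟨C, hC⟩ : ∃ C, ∀ᶠ z in 𝓝[K ×ˢ K] (a, b),
          dist z.1 z.2 ≤ C * dist (f z.1) (f z.2) := by
        by_cases hab : a = b
        · exact hab ▸ hdiag a ha
        · exact hf.eventually_dist_le_mul_dist_image_of_ne ha hb fun h => hab (hinj ha hb h)
      exact ⟨_, hC, C, fun z hz => hz⟩
  refine ⟨max C 1, by positivity, fun x hx y hy => (hC (x, y) ⟨hx, hy⟩).trans ?_⟩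
  gcongr
  exact le_max_left _ _

theorem bourgeois_abstract_lipschitz_stability_general
    {V H : Type*} [NormedAddCommGroup V] [NormedSpace ℝ V]
    [NormedAddCommGroup H] [NormedSpace ℝ H]
    (U : Set V)
    (VM : Submodule ℝ V) [FiniteDimensional ℝ VM]
    (KM : Set V) (hKMsub : KM ⊆ (VM : Set V) ∩ U)
    (hKMcompact : IsCompact KM) (hKMconvex : Convex ℝ KM)
    (T : V → H) (T' : V → V →L[ℝ] H)
    (hTdiff : ∀ x ∈ U, HasFDerivAt T (T' x) x)
    (hT'cont : ContinuousOn T' U)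
    (hTinj : Set.InjOn T ((VM : Set V) ∩ U))
    (hdTinj : ∀ x ∈ (VM : Set V) ∩ U, Set.InjOn (T' x) (VM : Set V)) :
    ∃ C > 0, ∀ x ∈ KM, ∀ y ∈ KM, ‖x - y‖ ≤ C * ‖T x - T y‖ := by
  have hTderiv : ∀ x ∈ KM, HasFDerivAt T (T' x) x := fun x hx => hTdiff x (hKMsub hx).2
  have hdiag : ∀ a ∈ KM, ∃ C, ∀ᶠ z in 𝓝[KM ×ˢ KM] (a, a),
      dist z.1 z.2 ≤ C * dist (T z.1) (T z.2) := by
    intro a ha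
    obtain ⟨K, hK, hbound⟩ :=
      (T' a : V →ₗ[ℝ] H).exists_pos_norm_le_mul_norm_of_injOn (hdTinj a (hKMsub ha))
    refine ⟨2 * K, ?_⟩
    simpa only [dist_eq_norm] using hKMconvex.eventually_norm_sub_le_mul_norm_image_sub
      (fun x hx => (hTderiv x hx).hasFDerivWithinAt)
      (hT'cont.mono (fun x hx => (hKMsub hx).2) a ha) hK
      (fun x hx y hy => hbound _ (VM.sub_mem (hKMsub hx).1 (hKMsub hy).1))
  obtain ⟨C, hC, hCK⟩ := hKMcompact.exists_pos_dist_le_mul_dist_image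
    (fun x hx => (hTderiv x hx).continuousAt.continuousWithinAt) (hTinj.mono hKMsub) hdiag
  exact ⟨C, hC, fun x hx y hy => by simpa only [dist_eq_norm] using hCK x hx y hy⟩

theorem bourgeois_abstract_lipschitz_stability
    {V H : Type*} [NormedAddCommGroup V] [NormedSpace ℝ V] [CompleteSpace V]
    [NormedAddCommGroup H] [NormedSpace ℝ H] [CompleteSpace H]
    (U : Set V) (hU : IsOpen U)
    (VM : Submodule ℝ V) [FiniteDimensional ℝ VM]
    (KM : Set V) (hKMsub : KM ⊆ (VM : Set V) ∩ U)
    (hKMcompact : IsCompact KM) (hKMconvex : Convex ℝ KM)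
    (T : V → H) (T' : V → V →L[ℝ] H)
    (hTdiff : ∀ x ∈ U, HasFDerivAt T (T' x) x)
    (hT'cont : ContinuousOn T' U)
    (hTinj : Set.InjOn T ((VM : Set V) ∩ U))
    (hdTinj : ∀ x ∈ (VM : Set V) ∩ U, Set.InjOn (T' x) (VM : Set V)) :
    ∃ C > 0, ∀ x ∈ KM, ∀ y ∈ KM, ‖x - y‖ ≤ C * ‖T x - T y‖ :=
  bourgeois_abstract_lipschitz_stability_general U VM KM hKMsub hKMcompact hKMconvex T T' hTdiff
    hT'cont hTinj hdTinj
end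

section
/- Let V and H be Banach spaces, V_M a finite-dimensional subspace of V, and K_M a compact convex subset of V_M contained in an open set U ⊆ V. If T : U → H is continuously Fréchet differentiable and for every x ∈ K_M the restriction of dT_x to V_M is injective, then there exist constants c > 0 and δ > 0 such that for all x, y ∈ K_M with ‖x − y‖ ≤ δ, ‖T(x) − T(y)‖_H ≥ c · ‖x − y‖_V. -/
/-!
Compactness of `K_M` and of the unit sphere of `V_M` turns pointwise injectivity of `dT_x` on
`V_M` into a uniform bound `c ‖v‖ ≤ ‖dT_x v‖`. Uniform continuity of `dT` on `K_M` makes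
`‖dT_z - dT_y‖ ≤ c / 2` along every short segment `[y, x] ⊆ K_M`, and the mean value inequality
then gives `‖T x - T y - dT_y (x - y)‖ ≤ c / 2 ‖x - y‖`, hence `‖T x - T y‖ ≥ c / 2 ‖x - y‖`.
-/

open Set Metric

section

variable {E F : Type*} [NormedAddCommGroup E] [NormedSpace ℝ E]
  [NormedAddCommGroup F] [NormedSpace ℝ F]

theorem LinearMap.mul_norm_le_norm_apply_of_sphere {f : E →ₗ[ℝ] F} {c : ℝ}
    (hf : ∀ u ∈ sphere (0 : E) 1, c ≤ ‖f u‖) (v : E) : c * ‖v‖ ≤ ‖f v‖ := by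
  rcases eq_or_ne v 0 with rfl | hv
  · simp
  have hv' : 0 < ‖v‖ := norm_pos_iff.2 hv
  have hu := hf (‖v‖⁻¹ • v) (by simp [norm_smul, hv'.ne'])
  rwa [map_smul, norm_smul, norm_inv, norm_norm, inv_mul_eq_div, le_div_iff₀ hv'] at hu

theorem IsCompact.exists_pos_mul_norm_le_of_injective [FiniteDimensional ℝ E] {X : Type*}
    [TopologicalSpace X] {K : Set X} (hK : IsCompact K) {A : X → E →L[ℝ] F}
    (hA : ContinuousOn A K) (hinj : ∀ x ∈ K, Function.Injective (A x)) :
    ∃ c > 0, ∀ x ∈ K, ∀ v, c * ‖v‖ ≤ ‖A x v‖ := by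
  have hcont : ContinuousOn (fun p : X × E => ‖A p.1 p.2‖) (K ×ˢ sphere 0 1) :=
    ((hA.comp continuousOn_fst fun _ hp => hp.1).clm_apply continuousOn_snd).norm
  have hpos : ∀ p ∈ K ×ˢ sphere (0 : E) 1, 0 < ‖A p.1 p.2‖ := by
    rintro ⟨x, u⟩ ⟨hx, hu⟩
    refine norm_pos_iff.2 fun h => ?_
    have : u = 0 := hinj x hx (h.trans (map_zero _).symm)
    simp [this] at hu
  obtain ⟨c, hc, hle⟩ := (hK.prod (isCompact_sphere 0 1)).exists_forall_le' hcont hpos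
  exact ⟨c, hc, fun x hx => LinearMap.mul_norm_le_norm_apply_of_sphere (f := (A x : E →ₗ[ℝ] F))
    fun u hu => hle (x, u) ⟨hx, hu⟩⟩

theorem Convex.sub_mul_norm_sub_le_norm_image_sub {s : Set E} (hs : Convex ℝ s) {f : E → F}
    {f' : E → E →L[ℝ] F} (hf : ∀ z ∈ s, HasFDerivWithinAt f (f' z) s z) {x y : E}
    (hx : x ∈ s) (hy : y ∈ s) {c ε : ℝ} (hlow : c * ‖x - y‖ ≤ ‖f' y (x - y)‖)
    (hclose : ∀ z ∈ s, ‖f' z - f' y‖ ≤ ε) :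
    (c - ε) * ‖x - y‖ ≤ ‖f x - f y‖ := by
  have hmvt : ‖f x - f y - f' y (x - y)‖ ≤ ε * ‖x - y‖ :=
    hs.norm_image_sub_le_of_norm_hasFDerivWithin_le' hf hclose hy hx
  have htri := norm_le_norm_add_norm_sub (f x - f y) (f' y (x - y))
  linarith

end

theorem local_lipschitz_lower_bound_general
    {V H : Type*} [NormedAddCommGroup V] [NormedSpace ℝ V]
    [NormedAddCommGroup H] [NormedSpace ℝ H]
    (U : Set V)
    (VM : Submodule ℝ V) [FiniteDimensional ℝ VM]
    (KM : Set V) (hKMsub : KM ⊆ (VM : Set V) ∩ U)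
    (hKMcompact : IsCompact KM) (hKMconvex : Convex ℝ KM)
    (T : V → H) (T' : V → V →L[ℝ] H)
    (hTdiff : ∀ x ∈ U, HasFDerivAt T (T' x) x)
    (hT'cont : ContinuousOn T' U)
    (hdTinj : ∀ x ∈ KM, Set.InjOn (T' x) (VM : Set V)) :
    ∃ c > 0, ∃ δ > 0, ∀ x ∈ KM, ∀ y ∈ KM,
      ‖x - y‖ ≤ δ → c * ‖x - y‖ ≤ ‖T x - T y‖ := by
  have hT'K : ContinuousOn T' KM := hT'cont.mono fun _ hx => (hKMsub hx).2
  obtain ⟨c, hc, hbound⟩ := hKMcompact.exists_pos_mul_norm_le_of_injective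
    (A := fun x => (T' x).comp VM.subtypeL) (hT'K.clm_comp continuousOn_const)
    fun x hx u v huv => Subtype.ext (hdTinj x hx u.2 v.2 huv)
  obtain ⟨δ, hδ, hT'δ⟩ := uniformContinuousOn_iff_le.1
    (hKMcompact.uniformContinuousOn_of_continuous hT'K) (c / 2) (half_pos hc)
  refine ⟨c / 2, half_pos hc, δ, hδ, fun x hx y hy hxy => ?_⟩
  have hseg : segment ℝ y x ⊆ KM := hKMconvex.segment_subset hy hx
  have hlow : c * ‖x - y‖ ≤ ‖T' y (x - y)‖ :=
    hbound y hy ⟨x - y, VM.sub_mem (hKMsub hx).1 (hKMsub hy).1⟩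
  have hclose : ∀ z ∈ segment ℝ y x, ‖T' z - T' y‖ ≤ c / 2 := fun z hz => by
    have hzy : dist z y ≤ dist x y := by
      simpa [dist_comm] using segment_subset_closedBall_left y x hz
    simpa [dist_eq_norm] using hT'δ z (hseg hz) y hy (hzy.trans (by rwa [dist_eq_norm]))
  have := (convex_segment y x).sub_mul_norm_sub_le_norm_image_sub
    (fun z hz => (hTdiff z (hKMsub (hseg hz)).2).hasFDerivWithinAt)
    (right_mem_segment ℝ y x) (left_mem_segment ℝ y x) hlow hclose
  linarith

theorem local_lipschitz_lower_bound
    {V H : Type*} [NormedAddCommGroup V] [NormedSpace ℝ V] [CompleteSpace V]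
    [NormedAddCommGroup H] [NormedSpace ℝ H] [CompleteSpace H]
    (U : Set V) (hU : IsOpen U)
    (VM : Submodule ℝ V) [FiniteDimensional ℝ VM]
    (KM : Set V) (hKMsub : KM ⊆ (VM : Set V) ∩ U)
    (hKMcompact : IsCompact KM) (hKMconvex : Convex ℝ KM)
    (T : V → H) (T' : V → V →L[ℝ] H)
    (hTdiff : ∀ x ∈ U, HasFDerivAt T (T' x) x)
    (hT'cont : ContinuousOn T' U)
    (hdTinj : ∀ x ∈ KM, Set.InjOn (T' x) (VM : Set V)) :
    ∃ c > 0, ∃ δ > 0, ∀ x ∈ KM, ∀ y ∈ KM,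
      ‖x - y‖ ≤ δ → c * ‖x - y‖ ≤ ‖T x - T y‖ :=
  local_lipschitz_lower_bound_general U VM KM hKMsub hKMcompact hKMconvex T T' hTdiff hT'cont hdTinj
end

section
/- Let V, H be Banach spaces, K ⊆ V compact convex contained in an open set U, and T : U → H continuously Fréchet differentiable. Suppose there is c > 0 such that ‖dT_x(y − x)‖_H ≥ c ‖y − x‖_V for all x, y ∈ K. Then there exists δ > 0 such that ‖T(y) − T(x)‖_H ≥ (c/2) ‖y − x‖_V whenever x, y ∈ K and ‖y − x‖_V ≤ δ. -/
/-! On a small segment `[x, y] ⊆ K` the derivative stays within `c / 2` of `T' x`, by uniform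
continuity of `T'` on the compact set `K`; the mean value inequality then gives
`‖T y - T x - T' x (y - x)‖ ≤ (c / 2) ‖y - x‖`, and the coercivity bound
`‖T' x (y - x)‖ ≥ c ‖y - x‖` leaves at least `(c / 2) ‖y - x‖` for `‖T y - T x‖`. -/

section

variable {V H : Type*} [NormedAddCommGroup V] [NormedSpace ℝ V]
  [NormedAddCommGroup H] [NormedSpace ℝ H]

theorem IsCompact.exists_norm_image_sub_sub_fderiv_le {K : Set V} (hK : IsCompact K)
    (hKconvex : Convex ℝ K) {T : V → H} {T' : V → V →L[ℝ] H}
    (hT : ∀ x ∈ K, HasFDerivWithinAt T (T' x) K x) (hT' : ContinuousOn T' K)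
    {ε : ℝ} (hε : 0 < ε) :
    ∃ δ > 0, ∀ x ∈ K, ∀ y ∈ K, ‖y - x‖ ≤ δ → ‖T y - T x - T' x (y - x)‖ ≤ ε * ‖y - x‖ := by
  obtain ⟨δ, hδ, hT'δ⟩ :=
    Metric.uniformContinuousOn_iff.1 (hK.uniformContinuousOn_of_continuous hT') ε hε
  refine ⟨δ / 2, half_pos hδ, fun x hx y hy hxy => ?_⟩
  have hseg : segment ℝ x y ⊆ K := hKconvex.segment_subset hx hy
  refine (convex_segment x y).norm_image_sub_le_of_norm_hasFDerivWithin_le'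
    (fun z hz => (hT z (hseg hz)).mono hseg) (fun z hz => ?_)
    (left_mem_segment ℝ x y) (right_mem_segment ℝ x y)
  have hzx : dist z x < δ := calc
    dist z x ≤ dist x y := segment_subset_closedBall_left x y hz
    _ = ‖y - x‖ := by rw [dist_comm, dist_eq_norm]
    _ < δ := by linarith
  simpa only [dist_eq_norm] using (hT'δ z (hseg hz) x hx hzx).le

end

theorem local_lower_bound_from_coercive_derivative_general
    {V H : Type*} [NormedAddCommGroup V] [NormedSpace ℝ V]
    [NormedAddCommGroup H] [NormedSpace ℝ H]
    (U : Set V)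
    (K : Set V) (hKsub : K ⊆ U) (hKcompact : IsCompact K) (hKconvex : Convex ℝ K)
    (T : V → H) (T' : V → V →L[ℝ] H)
    (hTdiff : ∀ x ∈ U, HasFDerivAt T (T' x) x)
    (hT'cont : ContinuousOn T' U)
    (c : ℝ) (hc : 0 < c)
    (hcoer : ∀ x ∈ K, ∀ y ∈ K, c * ‖y - x‖ ≤ ‖T' x (y - x)‖) :
    ∃ δ > 0, ∀ x ∈ K, ∀ y ∈ K, ‖y - x‖ ≤ δ →
      (c / 2) * ‖y - x‖ ≤ ‖T y - T x‖ := by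
  obtain ⟨δ, hδ, htaylor⟩ := hKcompact.exists_norm_image_sub_sub_fderiv_le hKconvex
    (fun x hx => (hTdiff x (hKsub hx)).hasFDerivWithinAt) (hT'cont.mono hKsub) (half_pos hc)
  refine ⟨δ, hδ, fun x hx y hy hxy => ?_⟩
  have hrem := htaylor x hx y hy hxy
  have hdiff : ‖T' x (y - x)‖ - ‖T y - T x‖ ≤ ‖T y - T x - T' x (y - x)‖ := by
    simpa only [norm_sub_rev] using norm_sub_norm_le (T' x (y - x)) (T y - T x)
  linarith [hcoer x hx y hy]

theorem local_lower_bound_from_coercive_derivative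
    {V H : Type*} [NormedAddCommGroup V] [NormedSpace ℝ V] [CompleteSpace V]
    [NormedAddCommGroup H] [NormedSpace ℝ H] [CompleteSpace H]
    (U : Set V) (hU : IsOpen U)
    (K : Set V) (hKsub : K ⊆ U) (hKcompact : IsCompact K) (hKconvex : Convex ℝ K)
    (T : V → H) (T' : V → V →L[ℝ] H)
    (hTdiff : ∀ x ∈ U, HasFDerivAt T (T' x) x)
    (hT'cont : ContinuousOn T' U)
    (c : ℝ) (hc : 0 < c)
    (hcoer : ∀ x ∈ K, ∀ y ∈ K, c * ‖y - x‖ ≤ ‖T' x (y - x)‖) :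
    ∃ δ > 0, ∀ x ∈ K, ∀ y ∈ K, ‖y - x‖ ≤ δ →
      (c / 2) * ‖y - x‖ ≤ ‖T y - T x‖ :=
  local_lower_bound_from_coercive_derivative_general U K hKsub hKcompact hKconvex T T' hTdiff
    hT'cont c hc hcoer
end
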